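/- arXiv:2301.05788 — 3 statements merged into one kernel-verified Lean document; each statement's English description precedes it below -/
import Mathlib

section
/- Let u ∈ M_m(ℂ) and v ∈ M_n(ℂ) be invertible matrices and let φ : M_m(ℂ) → M_n(ℂ) be a positive linear map. Then φ is exposed if and only if the positive linear map x ↦ v φ(u* x u) v* (that is, Ad_{v*} ∘ φ ∘ Ad_u) is exposed. -/
open Matrix ComplexOrder

noncomputable section

/-- A linear map between matrix algebras is positive if it sends positive
semidefinite matrices to positive semidefinite matrices. -/
def IsPosMap {m n : ℕ} (φ : Matrix (Fin m) (Fin m) ℂ →ₗ[ℂ] Matrix (Fin n) (Fin n) ℂ) : Prop :=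
  ∀ a : Matrix (Fin m) (Fin m) ℂ, a.PosSemidef → (φ a).PosSemidef

/-- A positive linear map `φ` is exposed (generates an exposed ray of the cone of
positive maps) if every positive map `ψ` such that `⟨η, φ(a) η⟩ = 0` implies
`⟨η, ψ(a) η⟩ = 0` (for `a` positive semidefinite) is a nonnegative multiple of `φ`. -/
def IsExposedMap {m n : ℕ} (φ : Matrix (Fin m) (Fin m) ℂ →ₗ[ℂ] Matrix (Fin n) (Fin n) ℂ) :
    Prop :=
  IsPosMap φ ∧
    ∀ ψ : Matrix (Fin m) (Fin m) ℂ →ₗ[ℂ] Matrix (Fin n) (Fin n) ℂ, IsPosMap ψ →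
      (∀ a : Matrix (Fin m) (Fin m) ℂ, a.PosSemidef → ∀ η : Fin n → ℂ,
        star η ⬝ᵥ (φ a) *ᵥ η = 0 → star η ⬝ᵥ (ψ a) *ᵥ η = 0) →
      ∃ c : ℝ, 0 ≤ c ∧ ψ = (c : ℂ) • φ

/-- The map `Ad_s : x ↦ s* x s`. -/
def adMap {m n : ℕ} (s : Matrix (Fin m) (Fin n) ℂ) :
    Matrix (Fin m) (Fin m) ℂ →ₗ[ℂ] Matrix (Fin n) (Fin n) ℂ where
  toFun x := sᴴ * x * s
  map_add' x y := by simp [Matrix.add_mul, Matrix.mul_add]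
  map_smul' c x := by simp [Matrix.smul_mul, Matrix.mul_smul]

/-- The transpose map on matrices, as a linear map. -/
def transposeLM (m : ℕ) : Matrix (Fin m) (Fin m) ℂ →ₗ[ℂ] Matrix (Fin m) (Fin m) ℂ where
  toFun x := xᵀ
  map_add' x y := Matrix.transpose_add x y
  map_smul' c x := by simp

lemma adMap_apply {m n : ℕ} (s : Matrix (Fin m) (Fin n) ℂ) (x) : adMap s x = sᴴ * x * s := rfl

lemma quad_conj {n : ℕ} (A s : Matrix (Fin n) (Fin n) ℂ) (η : Fin n → ℂ) :
    star η ⬝ᵥ (sᴴ * A * s) *ᵥ η = star (s *ᵥ η) ⬝ᵥ A *ᵥ (s *ᵥ η) := by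
  simp [Matrix.dotProduct_mulVec, Matrix.star_mulVec, ← Matrix.mulVec_mulVec,
    Matrix.vecMul_vecMul]

section cancel
variable {k : ℕ} (s : Matrix (Fin k) (Fin k) ℂ) (hs : IsUnit s.det)
  (x : Matrix (Fin k) (Fin k) ℂ)
include hs

lemma hconj_inv : sᴴ * s⁻¹ᴴ = 1 := by
  rw [← Matrix.conjTranspose_mul, Matrix.nonsing_inv_mul s hs, conjTranspose_one]

lemma hinv_conj : s⁻¹ᴴ * sᴴ = 1 := by
  rw [← Matrix.conjTranspose_mul, Matrix.mul_nonsing_inv s hs, conjTranspose_one]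

lemma cancel₁ : sᴴ * (s⁻¹ᴴ * x * s⁻¹) * s = x := by
  simp only [mul_assoc, Matrix.nonsing_inv_mul s hs, mul_one]
  rw [← mul_assoc, hconj_inv s hs, one_mul]

lemma cancel₂ : s⁻¹ᴴ * (sᴴ * x * s) * s⁻¹ = x := by
  simp only [mul_assoc, Matrix.mul_nonsing_inv s hs, mul_one]
  rw [← mul_assoc, hinv_conj s hs, one_mul]

lemma cancel₃ : s * (s⁻¹ * x * s⁻¹ᴴ) * sᴴ = x := by
  simp only [mul_assoc, hinv_conj s hs, mul_one]
  rw [← mul_assoc, Matrix.mul_nonsing_inv s hs, one_mul]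

lemma cancel₄ : s⁻¹ * (s * x * sᴴ) * s⁻¹ᴴ = x := by
  simp only [mul_assoc, hconj_inv s hs, mul_one]
  rw [← mul_assoc, Matrix.nonsing_inv_mul s hs, one_mul]

end cancel

/-- One direction: conjugation preserves exposedness. -/
lemma isExposed_conj {m n : ℕ}
    (u : Matrix (Fin m) (Fin m) ℂ) (v : Matrix (Fin n) (Fin n) ℂ)
    (hu : IsUnit u) (hv : IsUnit v)
    (φ : Matrix (Fin m) (Fin m) ℂ →ₗ[ℂ] Matrix (Fin n) (Fin n) ℂ)
    (hφ : IsExposedMap φ) :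
    IsExposedMap ((adMap vᴴ).comp (φ.comp (adMap u))) := by
  have hud : IsUnit u.det := (Matrix.isUnit_iff_isUnit_det u).mp hu
  have hvd : IsUnit v.det := (Matrix.isUnit_iff_isUnit_det v).mp hv
  obtain ⟨hφpos, hφexp⟩ := hφ
  constructor
  · intro a ha
    simp only [LinearMap.comp_apply, adMap_apply, conjTranspose_conjTranspose]
    exact ((hφpos _ (ha.conjTranspose_mul_mul_same u)).mul_mul_conjTranspose_same v)
  · intro ψ hψpos hψzero
    set ψ' := (adMap (v⁻¹)ᴴ).comp (ψ.comp (adMap u⁻¹)) with hψ'def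
    have hψ'pos : IsPosMap ψ' := by
      intro a ha
      simp only [hψ'def, LinearMap.comp_apply, adMap_apply, conjTranspose_conjTranspose]
      exact ((hψpos _ (ha.conjTranspose_mul_mul_same u⁻¹)).mul_mul_conjTranspose_same v⁻¹)
    have key : ∀ a : Matrix (Fin m) (Fin m) ℂ, a.PosSemidef → ∀ η : Fin n → ℂ,
        star η ⬝ᵥ (φ a) *ᵥ η = 0 → star η ⬝ᵥ (ψ' a) *ᵥ η = 0 := by
      intro a ha η hzero
      have hb : ((u⁻¹)ᴴ * a * u⁻¹).PosSemidef := ha.conjTranspose_mul_mul_same u⁻¹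
      set ξ := (v⁻¹)ᴴ *ᵥ η with hξ
      have hvξ : vᴴ *ᵥ ξ = η := by
        rw [hξ, Matrix.mulVec_mulVec, hconj_inv v hvd, Matrix.one_mulVec]
      have hΦzero : star ξ ⬝ᵥ
          (((adMap vᴴ).comp (φ.comp (adMap u))) ((u⁻¹)ᴴ * a * u⁻¹)) *ᵥ ξ = 0 := by
        simp only [LinearMap.comp_apply, adMap_apply, conjTranspose_conjTranspose,
          cancel₁ u hud a]
        rw [show v * φ a * vᴴ = (vᴴ)ᴴ * φ a * vᴴ by simp, quad_conj, hvξ]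
        exact hzero
      have h0 := hψzero _ hb ξ hΦzero
      simp only [hψ'def, LinearMap.comp_apply, adMap_apply, conjTranspose_conjTranspose]
      rw [show v⁻¹ * ψ ((u⁻¹)ᴴ * a * u⁻¹) * (v⁻¹)ᴴ
            = ((v⁻¹)ᴴ)ᴴ * ψ ((u⁻¹)ᴴ * a * u⁻¹) * (v⁻¹)ᴴ by simp,
        quad_conj, ← hξ]
      exact h0
    obtain ⟨c, hc, hceq⟩ := hφexp ψ' hψ'pos key
    refine ⟨c, hc, ?_⟩
    have hrec : ψ = (adMap vᴴ).comp (ψ'.comp (adMap u)) := by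
      ext x
      simp only [hψ'def, LinearMap.comp_apply, adMap_apply, conjTranspose_conjTranspose,
        cancel₂ u hud x, cancel₃ v hvd (ψ x)]
    rw [hrec, hceq]
    ext x
    simp [adMap_apply, Matrix.mul_smul, Matrix.smul_mul]

/-- For invertible `u ∈ M_m(ℂ)`, `v ∈ M_n(ℂ)` and a positive map `φ`, the map `φ`
is exposed iff `x ↦ v φ(u* x u) v*` (that is, `Ad_{v*} ∘ φ ∘ Ad_u`) is exposed. -/
theorem isExposed_conj_iff {m n : ℕ}
    (u : Matrix (Fin m) (Fin m) ℂ) (v : Matrix (Fin n) (Fin n) ℂ)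
    (hu : IsUnit u) (hv : IsUnit v)
    (φ : Matrix (Fin m) (Fin m) ℂ →ₗ[ℂ] Matrix (Fin n) (Fin n) ℂ)
    (hφ : IsPosMap φ) :
    IsExposedMap φ ↔ IsExposedMap ((adMap vᴴ).comp (φ.comp (adMap u))) := by
  have hud : IsUnit u.det := (Matrix.isUnit_iff_isUnit_det u).mp hu
  have hvd : IsUnit v.det := (Matrix.isUnit_iff_isUnit_det v).mp hv
  constructor
  · exact isExposed_conj u v hu hv φ
  · intro h
    have hu' : IsUnit u⁻¹ := Matrix.isUnit_nonsing_inv_iff.mpr hu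
    have hv' : IsUnit v⁻¹ := Matrix.isUnit_nonsing_inv_iff.mpr hv
    have h2 := isExposed_conj u⁻¹ v⁻¹ hu' hv' _ h
    convert h2 using 1
    ext x
    simp only [LinearMap.comp_apply, adMap_apply, conjTranspose_conjTranspose,
      cancel₁ u hud x, cancel₄ v hvd (φ x)]

end
end

section
/- Let φ : M_m(ℂ) → M_n(ℂ) be a positive linear map and let φ* : M_n(ℂ) → M_m(ℂ) be its adjoint with respect to the bilinear pairing ⟨a,b⟩ = Tr(a bᵀ), i.e., Tr(φ(a) bᵀ) = Tr(a φ*(b)ᵀ) for all a ∈ M_m(ℂ) and b ∈ M_n(ℂ). If φ is exposed, then φ* is exposed. -/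
open Matrix ComplexOrder

noncomputable section

/-!
Everything runs through the pairing `⟨a, b⟩ = Tr(a bᵀ)`, in which the quadratic form `η* c η` is
`⟨c, η̄ ηᵀ⟩` and every positive semidefinite matrix is a sum of rank-one matrices `ξ̄ ξᵀ`. Thus
`⟨ξ, ψ(b) ξ⟩ = ⟨φ(ξ̄ ξᵀ), b⟩` makes `ψ` positive. If a positive `χ` vanishes wherever `ψ` does, its
adjoint `χ*` is positive and vanishes wherever `φ` does: for `a = ∑ᵢ ξ̄ᵢ ξᵢᵀ`,
`⟨η, φ(a) η⟩ = ∑ᵢ ⟨ξᵢ, ψ(η̄ ηᵀ) ξᵢ⟩` is a sum of nonnegative terms, so if it is zero then so is every term, hence every term of the same sum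
for `χ`. Exposedness of `φ` gives `χ* = c φ`, and uniqueness of adjoints gives `χ = c ψ`.
-/

namespace Matrix

variable {ι : Type*} [Fintype ι]

theorem trace_mul_transpose_comm {R κ : Type*} [CommSemiring R] [Fintype κ]
    (X Y : Matrix ι κ R) : (X * Yᵀ).trace = (Y * Xᵀ).trace := by
  rw [← trace_transpose, transpose_mul, transpose_transpose]

theorem dotProduct_mulVec_eq_trace_mul_transpose {R : Type*} [CommSemiring R]
    (c : Matrix ι ι R) (x y : ι → R) : x ⬝ᵥ c *ᵥ y = (c * (vecMulVec x y)ᵀ).trace := by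
  rw [transpose_vecMulVec, mul_vecMulVec, trace_vecMulVec, dotProduct_comm]

theorem posSemidef_of_dotProduct_mulVec_nonneg {A : Matrix ι ι ℂ}
    (h : ∀ x, 0 ≤ star x ⬝ᵥ A *ᵥ x) : A.PosSemidef := by
  classical
  have hinner (x : EuclideanSpace ℂ ι) :
      inner ℂ (A.toEuclideanLin x) x = star x.ofLp ⬝ᵥ A *ᵥ x.ofLp := by
    rw [← inner_conj_symm, EuclideanSpace.inner_eq_star_dotProduct, dotProduct_comm]
    exact (IsSelfAdjoint.of_nonneg (h x.ofLp)).star_eq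
  rw [← isPositive_toEuclideanLin_iff, LinearMap.isPositive_iff]
  refine ⟨(LinearMap.isSymmetric_iff_inner_map_self_real _).2 fun x => ?_, fun x => ?_⟩
  · rw [hinner]
    exact Complex.conj_eq_iff_im.2 (Complex.nonneg_iff.1 (h _)).2.symm
  · rw [hinner]
    exact h _

variable {𝕜 : Type*} [RCLike 𝕜]

theorem PosSemidef.exists_trace_mul_transpose_eq_sum {a : Matrix ι ι 𝕜} (ha : a.PosSemidef) :
    ∃ (r : ℕ) (w : Fin r → ι → 𝕜), ∀ c : Matrix ι ι 𝕜,
      (c * aᵀ).trace = ∑ i, star (w i) ⬝ᵥ c *ᵥ w i := by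
  obtain ⟨r, v, rfl⟩ := posSemidef_iff_eq_sum_vecMulVec.1 ha
  refine ⟨r, fun i => star (v i), fun c => ?_⟩
  simp only [star_star, dotProduct_mulVec_eq_trace_mul_transpose, transpose_sum, Matrix.mul_sum,
    trace_sum]

theorem PosSemidef.trace_mul_transpose_nonneg {a c : Matrix ι ι 𝕜} (ha : a.PosSemidef)
    (hc : c.PosSemidef) : 0 ≤ (c * aᵀ).trace := by
  obtain ⟨r, w, hw⟩ := ha.exists_trace_mul_transpose_eq_sum
  rw [hw]
  exact Finset.sum_nonneg fun i _ => hc.dotProduct_mulVec_nonneg (w i)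

theorem PosSemidef.trace_mul_transpose_eq_zero_of_dotProduct_mulVec_eq_zero
    {a c d : Matrix ι ι 𝕜} (ha : a.PosSemidef) (hc : c.PosSemidef)
    (hcd : ∀ x, star x ⬝ᵥ c *ᵥ x = 0 → star x ⬝ᵥ d *ᵥ x = 0) (h : (c * aᵀ).trace = 0) :
    (d * aᵀ).trace = 0 := by
  obtain ⟨r, w, hw⟩ := ha.exists_trace_mul_transpose_eq_sum
  rw [hw] at h ⊢
  have hzero :=
    (Finset.sum_eq_zero_iff_of_nonneg fun i _ => hc.dotProduct_mulVec_nonneg (w i)).1 h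
  exact Finset.sum_eq_zero fun i hi => hcd _ (hzero i hi)

end Matrix

section TransposeAdjoint

variable {R ι κ : Type*} [CommSemiring R] [Fintype ι] [Fintype κ]

def IsTransposeAdjoint (φ : Matrix ι ι R →ₗ[R] Matrix κ κ R)
    (ψ : Matrix κ κ R →ₗ[R] Matrix ι ι R) : Prop :=
  ∀ a b, (φ a * bᵀ).trace = (a * (ψ b)ᵀ).trace

variable {φ : Matrix ι ι R →ₗ[R] Matrix κ κ R} {ψ ψ' : Matrix κ κ R →ₗ[R] Matrix ι ι R}

theorem IsTransposeAdjoint.symm (h : IsTransposeAdjoint φ ψ) : IsTransposeAdjoint ψ φ :=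
  fun b a => by rw [trace_mul_transpose_comm, ← h, trace_mul_transpose_comm]

theorem IsTransposeAdjoint.smul (h : IsTransposeAdjoint φ ψ) (c : R) :
    IsTransposeAdjoint (c • φ) (c • ψ) := fun a b => by
  simp only [LinearMap.smul_apply, transpose_smul, smul_mul, Matrix.mul_smul, trace_smul, h a b]

theorem IsTransposeAdjoint.unique [DecidableEq ι] (h : IsTransposeAdjoint φ ψ)
    (h' : IsTransposeAdjoint φ ψ') : ψ = ψ' := by
  ext b p q
  simpa only [trace_single_mul, transpose_apply, one_smul] using
    (h (single p q 1) b).symm.trans (h' (single p q 1) b)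

theorem IsTransposeAdjoint.dotProduct_mulVec_eq (h : IsTransposeAdjoint φ ψ)
    (a : Matrix ι ι R) (x y : κ → R) :
    x ⬝ᵥ φ a *ᵥ y = (ψ (vecMulVec x y) * aᵀ).trace := by
  rw [dotProduct_mulVec_eq_trace_mul_transpose, h, trace_mul_transpose_comm]

def transposeAdjoint [DecidableEq κ] (χ : Matrix κ κ R →ₗ[R] Matrix ι ι R) :
    Matrix ι ι R →ₗ[R] Matrix κ κ R where
  toFun a := of fun i j => (a * (χ (single i j 1))ᵀ).trace
  map_add' a a' := by ext; simp [Matrix.add_mul]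
  map_smul' c a := by ext; simp

theorem isTransposeAdjoint_transposeAdjoint [DecidableEq κ]
    (χ : Matrix κ κ R →ₗ[R] Matrix ι ι R) : IsTransposeAdjoint (transposeAdjoint χ) χ := by
  intro a b
  conv_lhs => rw [matrix_eq_sum_single b]
  conv_rhs => rw [matrix_eq_sum_single b]
  simp only [transpose_sum, Matrix.mul_sum, trace_sum, map_sum]
  refine Finset.sum_congr rfl fun i _ => Finset.sum_congr rfl fun j _ => ?_
  have hsingle : single i j (b i j) = b i j • single i j 1 := by
    rw [smul_single, smul_eq_mul, mul_one]
  rw [hsingle, map_smul]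
  simp [transposeAdjoint, trace_mul_single, mul_comm]

end TransposeAdjoint

section PosMap

variable {m n : ℕ} {φ : Matrix (Fin m) (Fin m) ℂ →ₗ[ℂ] Matrix (Fin n) (Fin n) ℂ}
  {ψ : Matrix (Fin n) (Fin n) ℂ →ₗ[ℂ] Matrix (Fin m) (Fin m) ℂ}

theorem IsTransposeAdjoint.isPosMap (h : IsTransposeAdjoint φ ψ) (hφ : IsPosMap φ) :
    IsPosMap ψ := fun b hb => posSemidef_of_dotProduct_mulVec_nonneg fun ξ => by
  rw [h.symm.dotProduct_mulVec_eq]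
  exact hb.trace_mul_transpose_nonneg (hφ _ (posSemidef_vecMulVec_star_self ξ))

theorem IsTransposeAdjoint.dotProduct_mulVec_eq_zero
    {φ' : Matrix (Fin m) (Fin m) ℂ →ₗ[ℂ] Matrix (Fin n) (Fin n) ℂ}
    {ψ' : Matrix (Fin n) (Fin n) ℂ →ₗ[ℂ] Matrix (Fin m) (Fin m) ℂ}
    (h : IsTransposeAdjoint φ ψ) (h' : IsTransposeAdjoint φ' ψ') (hψ : IsPosMap ψ)
    (hψψ' : ∀ b : Matrix (Fin n) (Fin n) ℂ, b.PosSemidef → ∀ ξ : Fin m → ℂ,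
      star ξ ⬝ᵥ ψ b *ᵥ ξ = 0 → star ξ ⬝ᵥ ψ' b *ᵥ ξ = 0)
    {a : Matrix (Fin m) (Fin m) ℂ} (ha : a.PosSemidef) {η : Fin n → ℂ}
    (hη : star η ⬝ᵥ φ a *ᵥ η = 0) : star η ⬝ᵥ φ' a *ᵥ η = 0 := by
  have hP := posSemidef_vecMulVec_star_self η
  rw [h.dotProduct_mulVec_eq] at hη
  rw [h'.dotProduct_mulVec_eq]
  exact ha.trace_mul_transpose_eq_zero_of_dotProduct_mulVec_eq_zero (hψ _ hP) (hψψ' _ hP) hη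

end PosMap

/-- If `φ : M_m(ℂ) → M_n(ℂ)` is an exposed positive map and `ψ : M_n(ℂ) → M_m(ℂ)` is
its adjoint with respect to the bilinear pairing `⟨a, b⟩ = Tr(a bᵀ)`, i.e.
`Tr(φ(a) bᵀ) = Tr(a ψ(b)ᵀ)` for all `a, b`, then `ψ` is exposed. -/
theorem adjoint_isExposed {m n : ℕ}
    (φ : Matrix (Fin m) (Fin m) ℂ →ₗ[ℂ] Matrix (Fin n) (Fin n) ℂ)
    (ψ : Matrix (Fin n) (Fin n) ℂ →ₗ[ℂ] Matrix (Fin m) (Fin m) ℂ)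
    (hadj : ∀ (a : Matrix (Fin m) (Fin m) ℂ) (b : Matrix (Fin n) (Fin n) ℂ),
      (φ a * bᵀ).trace = (a * (ψ b)ᵀ).trace)
    (hφ : IsExposedMap φ) :
    IsExposedMap ψ := by
  have hadj : IsTransposeAdjoint φ ψ := hadj
  obtain ⟨hφpos, hφexp⟩ := hφ
  have hψpos : IsPosMap ψ := hadj.isPosMap hφpos
  refine ⟨hψpos, fun χ hχpos hχψ => ?_⟩
  have hχ := isTransposeAdjoint_transposeAdjoint χ
  obtain ⟨c, hc, hχφ⟩ := hφexp (transposeAdjoint χ) (hχ.symm.isPosMap hχpos)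
    fun a ha η hη => hadj.dotProduct_mulVec_eq_zero hχ hψpos hχψ ha hη
  exact ⟨c, hc, (hχφ ▸ hχ).unique (hadj.smul (c : ℂ))⟩
end
end

section
/- For every r ≥ 1, the kernel of the linear map îd_r : M_r(ℂ)⊗ℂ^r → ℂ^r determined by a⊗η ↦ aη equals the linear span of the simple tensors a⊗η with a ∈ M_r(ℂ) positive semidefinite and aη = 0; equivalently, this span N_{id_r} has dimension r³ − r. -/
open Matrix ComplexOrder

noncomputable section

/-- Woronowicz's map `φ̂ : M_m(ℂ) ⊗ ℂ^n → ℂ^n`, determined by `a ⊗ η ↦ φ(a) η`. -/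
def hatMap {m n : ℕ} (φ : Matrix (Fin m) (Fin m) ℂ →ₗ[ℂ] Matrix (Fin n) (Fin n) ℂ) :
    TensorProduct ℂ (Matrix (Fin m) (Fin m) ℂ) (Fin n → ℂ) →ₗ[ℂ] (Fin n → ℂ) :=
  TensorProduct.lift (Matrix.toLin'.toLinearMap.comp φ)

/-- The subspace `N_φ ⊆ M_m(ℂ) ⊗ ℂ^n` spanned by the simple tensors `a ⊗ η`
with `a` positive semidefinite and `φ(a) η = 0`. -/
def Nspace {m n : ℕ} (φ : Matrix (Fin m) (Fin m) ℂ →ₗ[ℂ] Matrix (Fin n) (Fin n) ℂ) :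
    Submodule ℂ (TensorProduct ℂ (Matrix (Fin m) (Fin m) ℂ) (Fin n → ℂ)) :=
  Submodule.span ℂ
    {x | ∃ (a : Matrix (Fin m) (Fin m) ℂ) (η : Fin n → ℂ),
      a.PosSemidef ∧ (φ a) *ᵥ η = 0 ∧ x = a ⊗ₜ[ℂ] η}

/-!
The inclusion `N ⊆ ker îd` is immediate. Conversely, `N` contains `u v^* ⊗ η` whenever `v ⊥ η`:
if also `u ⊥ η`, polarize the generators `w w^* ⊗ η` with `w ⊥ η`; otherwise split off the
component of `u` along `η`. For the remaining `η ξ^* ⊗ η` with `ξ ⊥ η`, the vectors `w = ξ + ω̄ η`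
and `ζ = |ξ|² η - ω |η|² ξ` are orthogonal for every `ω`, and summing `ω • w w^* ⊗ ζ` over the
fourth roots of unity isolates `4 |ξ|² • η ξ^* ⊗ η`. As `u e_j^* ⊗ e_j - u e_0^* ⊗ e_0` differs
from `u (e_j + e_0)^* ⊗ (e_j - e_0)` by `u e_j^* ⊗ e_0 - u e_0^* ⊗ e_j`, every `x` is congruent
modulo `N` to `îd(x) e_0^* ⊗ e_0`, which vanishes on the kernel. The dimension is then
rank–nullity for the surjection `îd`.
-/

open TensorProduct Complex

theorem hatMap_tmul {m n : ℕ} (φ : Matrix (Fin m) (Fin m) ℂ →ₗ[ℂ] Matrix (Fin n) (Fin n) ℂ)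
    (a : Matrix (Fin m) (Fin m) ℂ) (η : Fin n → ℂ) : hatMap φ (a ⊗ₜ η) = φ a *ᵥ η := rfl

theorem Nspace_le_ker_hatMap {m n : ℕ}
    (φ : Matrix (Fin m) (Fin m) ℂ →ₗ[ℂ] Matrix (Fin n) (Fin n) ℂ) :
    Nspace φ ≤ LinearMap.ker (hatMap φ) := by
  rw [Nspace, Submodule.span_le]
  rintro _ ⟨a, η, -, h, rfl⟩
  exact h

section

variable {r : ℕ}

local notation "𝒩" =>
  Nspace (LinearMap.id : Matrix (Fin r) (Fin r) ℂ →ₗ[ℂ] Matrix (Fin r) (Fin r) ℂ)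

theorem vecMulVec_self_star_tmul_mem_Nspace {w η : Fin r → ℂ} (h : star w ⬝ᵥ η = 0) :
    vecMulVec w (star w) ⊗ₜ η ∈ 𝒩 :=
  Submodule.subset_span
    ⟨_, η, posSemidef_vecMulVec_self_star w, by simp [vecMulVec_mulVec, h], rfl⟩

theorem vecMulVec_star_tmul_mem_Nspace_of_orthogonal {u v η : Fin r → ℂ}
    (hu : star u ⬝ᵥ η = 0) (hv : star v ⬝ᵥ η = 0) : vecMulVec u (star v) ⊗ₜ η ∈ 𝒩 := by
  let P : ℂ → Matrix (Fin r) (Fin r) ℂ ⊗[ℂ] (Fin r → ℂ) := fun c =>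
    vecMulVec (u + c • v) (star (u + c • v)) ⊗ₜ η
  have hP : ∀ c, P c ∈ 𝒩 := fun c => vecMulVec_self_star_tmul_mem_Nspace <| by
    simp [star_add, star_smul, add_dotProduct, smul_dotProduct, hu, hv]
  have polarization :
      (4 : ℂ) • (vecMulVec u (star v) ⊗ₜ η) = P 1 - P (-1) + I • P I - I • P (-I) := by
    simp only [P, add_vecMulVec, vecMulVec_add, smul_vecMulVec, vecMulVec_smul, star_add,
      star_smul, add_tmul, ← smul_tmul', Complex.star_def,
      map_one, map_neg, conj_I]
    match_scalars <;> grind [I_sq]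
  rw [← Submodule.smul_mem_iff _ (four_ne_zero : (4 : ℂ) ≠ 0), polarization]
  exact sub_mem (add_mem (sub_mem (hP 1) (hP (-1))) (Submodule.smul_mem _ _ (hP I)))
    (Submodule.smul_mem _ _ (hP (-I)))

theorem vecMulVec_star_tmul_self_mem_Nspace {ξ η : Fin r → ℂ} (h : star ξ ⬝ᵥ η = 0) :
    vecMulVec η (star ξ) ⊗ₜ η ∈ 𝒩 := by
  rcases eq_or_ne ξ 0 with rfl | hξ
  · simp
  set m := star ξ ⬝ᵥ ξ
  set n := star η ⬝ᵥ η
  have h' : star η ⬝ᵥ ξ = 0 := by rw [star_dotProduct, h, star_zero]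
  let P : ℂ → Matrix (Fin r) (Fin r) ℂ ⊗[ℂ] (Fin r → ℂ) := fun c =>
    vecMulVec (ξ + star c • η) (star (ξ + star c • η)) ⊗ₜ (m • η - (c * n) • ξ)
  have hP : ∀ c, P c ∈ 𝒩 := fun c => vecMulVec_self_star_tmul_mem_Nspace <| by
    simp only [star_add, star_smul, star_star, add_dotProduct, smul_dotProduct, dotProduct_sub,
      dotProduct_smul, h, h', smul_eq_mul]
    ring
  have fourier :
      (4 * m) • (vecMulVec η (star ξ) ⊗ₜ η) = P 1 - P (-1) + I • P I - I • P (-I) := by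
    simp only [P, add_vecMulVec, vecMulVec_add, smul_vecMulVec, vecMulVec_smul, star_add,
      star_smul, tmul_sub, add_tmul, tmul_smul, ← smul_tmul', Complex.star_def,
      map_one, map_neg, conj_I]
    match_scalars <;> grind [I_sq]
  have hm : 4 * m ≠ 0 := mul_ne_zero four_ne_zero (by simpa [m] using hξ)
  rw [← Submodule.smul_mem_iff _ hm, fourier]
  exact sub_mem (add_mem (sub_mem (hP 1) (hP (-1))) (Submodule.smul_mem _ _ (hP I)))
    (Submodule.smul_mem _ _ (hP (-I)))

theorem vecMulVec_star_tmul_mem_Nspace (u : Fin r → ℂ) {v η : Fin r → ℂ}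
    (h : star v ⬝ᵥ η = 0) : vecMulVec u (star v) ⊗ₜ η ∈ 𝒩 := by
  rcases eq_or_ne η 0 with rfl | hη
  · simp
  set α := star ((star u ⬝ᵥ η) / (star η ⬝ᵥ η))
  have hperp : star (u - α • η) ⬝ᵥ η = 0 := by
    simp only [α, star_sub, star_smul, star_star, sub_dotProduct, smul_dotProduct, smul_eq_mul]
    rw [div_mul_cancel₀ _ (by simpa using hη), sub_self]
  rw [← sub_add_cancel u (α • η), add_vecMulVec, add_tmul, smul_vecMulVec, ← smul_tmul']
  exact add_mem (vecMulVec_star_tmul_mem_Nspace_of_orthogonal hperp h)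
    (Submodule.smul_mem _ _ (vecMulVec_star_tmul_self_mem_Nspace h))

theorem vecMulVec_star_tmul_sub_mem_Nspace (u : Fin r → ℂ) {p q : Fin r → ℂ}
    (hpq : star p ⬝ᵥ q = 0) (hpp : star p ⬝ᵥ p = star q ⬝ᵥ q) :
    vecMulVec u (star p) ⊗ₜ p - vecMulVec u (star q) ⊗ₜ q ∈ 𝒩 := by
  have hqp : star q ⬝ᵥ p = 0 := by rw [star_dotProduct, hpq, star_zero]
  have : vecMulVec u (star p) ⊗ₜ[ℂ] p - vecMulVec u (star q) ⊗ₜ[ℂ] q =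
      vecMulVec u (star (p + q)) ⊗ₜ (p - q) + vecMulVec u (star p) ⊗ₜ q
        - vecMulVec u (star q) ⊗ₜ p := by
    simp only [star_add, vecMulVec_add, add_tmul, tmul_sub]
    abel
  rw [this]
  refine sub_mem (add_mem (vecMulVec_star_tmul_mem_Nspace u ?_)
    (vecMulVec_star_tmul_mem_Nspace u hpq)) (vecMulVec_star_tmul_mem_Nspace u hqp)
  simp [star_add, add_dotProduct, dotProduct_sub, hpq, hqp, hpp]

theorem sub_vecMulVec_hatMap_tmul_mem_Nspace (i₀ : Fin r)
    (x : Matrix (Fin r) (Fin r) ℂ ⊗[ℂ] (Fin r → ℂ)) :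
    x - vecMulVec (hatMap LinearMap.id x) (star (Pi.single i₀ 1)) ⊗ₜ Pi.single i₀ 1 ∈ 𝒩 := by
  set e : Fin r → ℂ := Pi.single i₀ 1
  let L : Matrix (Fin r) (Fin r) ℂ ⊗[ℂ] (Fin r → ℂ) →ₗ[ℂ] _ := LinearMap.id -
    (TensorProduct.mk ℂ _ _).flip e ∘ₗ (vecMulVecBilin ℂ ℂ).flip (star e) ∘ₗ hatMap LinearMap.id
  suffices Submodule.comap L 𝒩 = ⊤ from Submodule.eq_top_iff'.1 this x
  rw [eq_top_iff, ← ((stdBasis ℂ (Fin r) (Fin r)).tensorProduct (Pi.basisFun ℂ (Fin r))).span_eq,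
    Submodule.span_le]
  rintro _ ⟨⟨⟨i, j⟩, k⟩, rfl⟩
  simp only [L, SetLike.mem_coe, Submodule.mem_comap, LinearMap.sub_apply, LinearMap.id_apply,
    LinearMap.comp_apply, LinearMap.flip_apply, mk_apply, vecMulVecBilin_apply_apply,
    Module.Basis.tensorProduct_apply, stdBasis_eq_single, Pi.basisFun_apply,
    single_eq_single_vecMulVec_single, hatMap_tmul, vecMulVec_mulVec, op_smul_eq_smul,
    single_dotProduct, one_mul, Pi.single_apply]
  rcases eq_or_ne j k with rfl | hjk
  · rcases eq_or_ne j i₀ with rfl | hj₀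
    · simp [e]
    simpa [e] using vecMulVec_star_tmul_sub_mem_Nspace (Pi.single i 1) (p := Pi.single j 1)
      (q := e) (by simp [e, hj₀]) (by simp [e])
  · simpa [hjk] using vecMulVec_star_tmul_mem_Nspace (Pi.single i 1) (v := Pi.single j 1)
      (η := Pi.single k 1) (by simp [hjk])

theorem ker_hatMap_id_le_Nspace (hr : 0 < r) : LinearMap.ker (hatMap LinearMap.id) ≤ 𝒩 :=
  fun x hx => by
    simpa [LinearMap.mem_ker.1 hx] using sub_vecMulVec_hatMap_tmul_mem_Nspace ⟨0, hr⟩ x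

theorem finrank_ker_hatMap_id :
    Module.finrank ℂ (LinearMap.ker
      (hatMap (LinearMap.id : Matrix (Fin r) (Fin r) ℂ →ₗ[ℂ] Matrix (Fin r) (Fin r) ℂ))) =
      r ^ 3 - r := by
  have hrange : LinearMap.range (hatMap (LinearMap.id : Matrix (Fin r) (Fin r) ℂ →ₗ[ℂ] _)) = ⊤ :=
    LinearMap.range_eq_top.2 fun u => ⟨1 ⊗ₜ u, by simp [hatMap_tmul]⟩
  have := LinearMap.finrank_range_add_finrank_ker
    (hatMap (LinearMap.id : Matrix (Fin r) (Fin r) ℂ →ₗ[ℂ] _))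
  rw [hrange, finrank_top, Module.finrank_tensorProduct, Module.finrank_matrix,
    Module.finrank_fin_fun] at this
  simp only [Fintype.card_fin, Module.finrank_self, mul_one] at this
  rw [pow_three', ← this, Nat.add_sub_cancel_left]

end

/-- For `r ≥ 1`, the kernel of `îd_r : M_r(ℂ) ⊗ ℂ^r → ℂ^r`, `a ⊗ η ↦ a η`, equals
the span `N_{id_r}` of the simple tensors `a ⊗ η` with `a` positive semidefinite and
`a η = 0`; equivalently, this span has dimension `r³ - r`. -/
theorem ker_hatMap_id_eq_Nspace (r : ℕ) (hr : 1 ≤ r) :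
    LinearMap.ker
        (hatMap (LinearMap.id : Matrix (Fin r) (Fin r) ℂ →ₗ[ℂ] Matrix (Fin r) (Fin r) ℂ)) =
      Nspace (LinearMap.id : Matrix (Fin r) (Fin r) ℂ →ₗ[ℂ] Matrix (Fin r) (Fin r) ℂ) ∧
    Module.finrank ℂ
        (Nspace (LinearMap.id : Matrix (Fin r) (Fin r) ℂ →ₗ[ℂ] Matrix (Fin r) (Fin r) ℂ)) =
      r ^ 3 - r := by
  have hker := le_antisymm (ker_hatMap_id_le_Nspace hr) (Nspace_le_ker_hatMap LinearMap.id)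
  exact ⟨hker, hker ▸ finrank_ker_hatMap_id⟩

end
end
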